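/- Let n ≥ 2 and let x_1,…,x_n : ℝ → ℝ be functions, each differentiable at 0, whose values x_1(0),…,x_n(0) are pairwise distinct and strictly positive. Fix q with 2 ≤ q ≤ n and suppose that for all t in a neighbourhood of 0 the elementary symmetric polynomials satisfy e_j(x(t)) = e_j(x(0)) for every j ∈ {1,…,n} with j ≠ q, while e_q(x(t)) = e_q(x(0)) + t. Then for each k, the derivative of x_k at 0 equals (−1)^{q+1} · x_k(0)^{n−q} / P_k, where P_k = ∏_{i≠k}(x_k(0) − x_i(0)). (This is the formula ∂x_k/∂s_q = (−1)^{q+1} x_k^{n−q} / ∏_{i≠k}(x_k − x_i) for the derivative of a root of the characteristic polynomial with respect to its coefficients.) -/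

import Mathlib

/-!
Differentiate `F t = ∏ i, (x k 0 - x i t)` at `0` in two ways. By Vieta,
`F t = ∑ j, (-1)^j e_j(x t) (x k 0)^(n-j)`, and near `0` only `e_q` moves, so `F` is affine
with slope `(-1)^q (x k 0)^(n-q)`. By the product rule, since `x k 0` is a root of `F 0`, every
term except the one differentiating the `k`-th factor vanishes, so `F' 0 = -P_k x_k'(0)`.
-/

/-- The `j`-th elementary symmetric polynomial of `x : Fin n → ℝ`. -/
noncomputable def esymm (n j : ℕ) (x : Fin n → ℝ) : ℝ :=
  ∑ s ∈ Finset.powersetCard j (Finset.univ : Finset (Fin n)), ∏ u ∈ s, x u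

open Finset Polynomial Filter Topology

theorem esymm_zero (n : ℕ) (x : Fin n → ℝ) : esymm n 0 x = 1 := by
  simp [esymm]

theorem prod_sub_eq_sum_esymm (n : ℕ) (x : Fin n → ℝ) (y : ℝ) :
    ∏ i, (y - x i) = ∑ j ∈ range (n + 1), (-1) ^ j * esymm n j x * y ^ (n - j) := by
  have := congrArg (eval y) (Multiset.prod_X_sub_X_eq_sum_esymm (univ.val.map x))
  simp only [Multiset.map_map, eval_multiset_prod, Function.comp_def, eval_sub, eval_X, eval_C,
    eval_finsetSum, eval_mul, eval_pow, eval_neg, eval_one, Multiset.card_map,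
    Finset.esymm_map_val, card_val, card_univ, Fintype.card_fin] at this
  rw [Finset.prod_eq_multiset_prod, this]
  simp only [esymm, mul_assoc]

theorem prod_sub_eq_add_of_esymm_eq {n q : ℕ} (hqn : q ≤ n) {z w : Fin n → ℝ} {t : ℝ}
    (hfix : ∀ j, 1 ≤ j → j ≤ n → j ≠ q → esymm n j z = esymm n j w)
    (hvar : esymm n q z = esymm n q w + t) (y : ℝ) :
    ∏ i, (y - z i) = ∏ i, (y - w i) + (-1) ^ q * y ^ (n - q) * t := by
  have hterm : ∀ j ∈ range (n + 1), (-1) ^ j * esymm n j z * y ^ (n - j) =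
      (-1) ^ j * esymm n j w * y ^ (n - j) + if q = j then (-1) ^ q * y ^ (n - q) * t else 0 := by
    intro j hj
    rcases eq_or_ne q j with rfl | hqj
    · rw [hvar, if_pos rfl]; ring
    rcases Nat.eq_zero_or_pos j with rfl | hj0
    · rw [esymm_zero, esymm_zero, if_neg hqj, add_zero]
    · rw [hfix j hj0 (Nat.lt_succ_iff.mp (mem_range.mp hj)) hqj.symm, if_neg hqj, add_zero]
  rw [prod_sub_eq_sum_esymm, prod_sub_eq_sum_esymm, sum_congr rfl hterm, sum_add_distrib,
    sum_ite_eq, if_pos (mem_range.mpr (Nat.lt_succ_of_le hqn))]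

theorem hasDerivAt_prod_sub_of_root {ι 𝕜 : Type*} [Fintype ι] [DecidableEq ι]
    [NontriviallyNormedField 𝕜] {x : ι → 𝕜 → 𝕜} {x' : ι → 𝕜} {t₀ : 𝕜}
    (hx : ∀ i, HasDerivAt (x i) (x' i) t₀) (k : ι) :
    HasDerivAt (fun t => ∏ i, (x k t₀ - x i t))
      (-(∏ i ∈ univ.erase k, (x k t₀ - x i t₀)) * x' k) t₀ := by
  refine (HasDerivAt.fun_finsetProd fun i _ => (hx i).const_sub (x k t₀)).congr_deriv ?_
  rw [sum_eq_single k]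
  · rw [smul_eq_mul, mul_neg, neg_mul]
  · intro i _ hik
    rw [prod_eq_zero (mem_erase.mpr ⟨Ne.symm hik, mem_univ k⟩) (sub_self _), zero_smul]
  · simp

theorem stmt_17_general (n : ℕ) (x : Fin n → ℝ → ℝ)
    (hdiff : ∀ k, DifferentiableAt ℝ (x k) 0)
    (hdist : ∀ k l, k ≠ l → x k 0 ≠ x l 0)
    (q : ℕ) (hqn : q ≤ n)
    (hfix : ∀ᶠ t in nhds (0 : ℝ), ∀ j, 1 ≤ j → j ≤ n → j ≠ q →
      esymm n j (fun k => x k t) = esymm n j (fun k => x k 0))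
    (hvar : ∀ᶠ t in nhds (0 : ℝ),
      esymm n q (fun k => x k t) = esymm n q (fun k => x k 0) + t) :
    ∀ k, deriv (x k) 0 = (-1 : ℝ) ^ (q + 1) * (x k 0) ^ (n - q) /
        ∏ i ∈ Finset.univ.erase k, (x k 0 - x i 0) := by
  intro k
  set P := ∏ i ∈ univ.erase k, (x k 0 - x i 0)
  have hprod := hasDerivAt_prod_sub_of_root (fun i => (hdiff i).hasDerivAt) k
  have haffine : (fun t => ∏ i, (x k 0 - x i t)) =ᶠ[𝓝 0]
      fun t => ∏ i, (x k 0 - x i 0) + (-1) ^ q * x k 0 ^ (n - q) * t := by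
    filter_upwards [hfix, hvar] with t hfix hvar
    exact prod_sub_eq_add_of_esymm_eq hqn hfix hvar _
  have hlin := ((hasDerivAt_id (0 : ℝ)).const_mul ((-1) ^ q * x k 0 ^ (n - q))).const_add
    (∏ i, (x k 0 - x i 0))
  have hderiv : (-1) ^ q * x k 0 ^ (n - q) * 1 = -P * deriv (x k) 0 :=
    (hlin.congr_of_eventuallyEq haffine).unique hprod
  have hP : P ≠ 0 :=
    prod_ne_zero_iff.mpr fun i hi => sub_ne_zero.mpr (hdist k i (ne_of_mem_erase hi).symm)
  rw [eq_div_iff hP, pow_succ]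
  linear_combination hderiv

/-- The formula `∂x_k/∂s_q = (−1)^{q+1} x_k^{n−q} / ∏_{i≠k}(x_k − x_i)` for the
derivative of a root of the characteristic polynomial with respect to its
coefficients. -/
theorem stmt_17 (n : ℕ) (hn : 2 ≤ n) (x : Fin n → ℝ → ℝ)
    (hdiff : ∀ k, DifferentiableAt ℝ (x k) 0)
    (hdist : ∀ k l, k ≠ l → x k 0 ≠ x l 0)
    (hpos : ∀ k, 0 < x k 0)
    (q : ℕ) (hq2 : 2 ≤ q) (hqn : q ≤ n)
    (hfix : ∀ᶠ t in nhds (0 : ℝ), ∀ j, 1 ≤ j → j ≤ n → j ≠ q →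
      esymm n j (fun k => x k t) = esymm n j (fun k => x k 0))
    (hvar : ∀ᶠ t in nhds (0 : ℝ),
      esymm n q (fun k => x k t) = esymm n q (fun k => x k 0) + t) :
    ∀ k, deriv (x k) 0 = (-1 : ℝ) ^ (q + 1) * (x k 0) ^ (n - q) /
        ∏ i ∈ Finset.univ.erase k, (x k 0 - x i 0) :=
  stmt_17_general n x hdiff hdist q hqn hfix hvar
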